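/- arXiv:2401.05180 — 3 statements merged into one kernel-verified Lean document; each statement's English description precedes it below -/
import Mathlib

section
/- For all real numbers φ and c and every vector ξ = (ξ₁, ξ₂) ∈ ℝ², the quadratic form of the mobility matrix satisfies ξᵀ B(φ,c) ξ = M(φ)(ξ₁ − c ξ₂)² + c e^{−φ} ξ₂². In particular, if c ≥ 0 then ξᵀ B(φ,c) ξ ≥ 0, i.e. B(φ,c) is positive semidefinite. -/
open Matrix

/-- The degenerate mobility `M(φ) = φ²(1-φ)²`. -/
noncomputable def M (φ : ℝ) : ℝ := φ ^ 2 * (1 - φ) ^ 2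

/-- The mobility matrix `B(φ,c)` of the Cahn–Hilliard cross-diffusion system. -/
noncomputable def B (φ c : ℝ) : Matrix (Fin 2) (Fin 2) ℝ :=
  !![M φ, -c * M φ; -c * M φ, c * Real.exp (-φ) + c ^ 2 * M φ]

/- `B(φ,c) = Lᵀ diag(M φ, c e^{-φ}) L` with the shear `L = !![1, -c; 0, 1]`, so its quadratic form
is a weighted sum of squares in the sheared coordinates `(ξ₁ - c ξ₂, ξ₂)`. -/

theorem dotProduct_mulVec_shear {R : Type*} [CommRing R] (a c d : R) (ξ : Fin 2 → R) :
    ξ ⬝ᵥ !![a, -c * a; -c * a, d + c ^ 2 * a] *ᵥ ξ = a * (ξ 0 - c * ξ 1) ^ 2 + d * ξ 1 ^ 2 := by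
  simp only [dotProduct, mulVec, Fin.sum_univ_two, of_apply, cons_val', cons_val_zero,
    cons_val_one, empty_val', cons_val_fin_one]
  ring

theorem M_nonneg (φ : ℝ) : 0 ≤ M φ := by
  unfold M
  positivity

theorem mobility_matrix_quadratic_form (φ c : ℝ) (ξ : Fin 2 → ℝ) :
    ξ ⬝ᵥ (B φ c).mulVec ξ
      = M φ * (ξ 0 - c * ξ 1) ^ 2 + c * Real.exp (-φ) * (ξ 1) ^ 2
    ∧ (0 ≤ c → 0 ≤ ξ ⬝ᵥ (B φ c).mulVec ξ) := by
  have hB : ξ ⬝ᵥ (B φ c).mulVec ξ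
      = M φ * (ξ 0 - c * ξ 1) ^ 2 + c * Real.exp (-φ) * (ξ 1) ^ 2 :=
    dotProduct_mulVec_shear _ _ _ ξ
  refine ⟨hB, fun hc => ?_⟩
  rw [hB]
  have := M_nonneg φ
  positivity
end

section
/- For every δ with 0 < δ < 1/2 and every φ ≥ 1−δ, the entropy density with cutoff satisfies the quadratic lower bound Φ_δ(φ) ≥ (φ − (1−δ))² / (2 δ² (1−δ)²). -/
/-- The truncated (nondegenerate) mobility `M_δ`. -/
noncomputable def Md (δ φ : ℝ) : ℝ :=
  if φ ≤ δ then M δ else if φ ≤ 1 - δ then M φ else M (1 - δ)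

/-- The entropy density with cutoff `Φ_δ(φ) = ∫_{1/2}^{φ} ∫_{1/2}^{s} dr ds / M_δ(r)`. -/
noncomputable def Phid (δ φ : ℝ) : ℝ :=
  ∫ s in (1 / 2 : ℝ)..φ, ∫ r in (1 / 2 : ℝ)..s, 1 / Md δ r

/-!
For `δ ≤ 1/2`, `M_δ` is `M` evaluated at the clamp of `φ` to `[δ, 1 - δ]`; hence it is continuous,
positive, and equal to `M(1 - δ) = δ²(1 - δ)²` on `[1 - δ, ∞)`. So the inner integral of `Φ_δ` is
nonnegative on `[1/2, 1 - δ]` and at least `(s - (1 - δ)) / M(1 - δ)` for `s ≥ 1 - δ`; integrating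
once more gives the quadratic bound.
-/

open Set intervalIntegral

lemma integral_le_integral_of_nonneg_of_le {f h : ℝ → ℝ} {x₀ a b : ℝ}
    (hf : Continuous f) (hh : Continuous h) (hx₀a : x₀ ≤ a) (hab : a ≤ b)
    (hf₀ : ∀ x ∈ Icc x₀ a, 0 ≤ f x) (hhf : ∀ x ∈ Icc a b, h x ≤ f x) :
    ∫ x in a..b, h x ≤ ∫ x in x₀..b, f x := by
  rw [← integral_add_adjacent_intervals (hf.intervalIntegrable x₀ a) (hf.intervalIntegrable a b)]
  have hleft : 0 ≤ ∫ x in x₀..a, f x := integral_nonneg hx₀a hf₀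
  have hright : ∫ x in a..b, h x ≤ ∫ x in a..b, f x :=
    integral_mono_on hab (hh.intervalIntegrable a b) (hf.intervalIntegrable a b) hhf
  linarith

lemma mul_sq_div_two_le_integral_integral {f : ℝ → ℝ} {x₀ a b C : ℝ}
    (hf : Continuous f) (hx₀a : x₀ ≤ a) (hab : a ≤ b)
    (hf₀ : ∀ x ∈ Icc x₀ a, 0 ≤ f x) (hCf : ∀ x, a ≤ x → C ≤ f x) :
    C * (b - a) ^ 2 / 2 ≤ ∫ s in x₀..b, ∫ r in x₀..s, f r := by
  have hinner : ∀ s ∈ Icc a b, C * (s - a) ≤ ∫ r in x₀..s, f r := fun s hs => by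
    simpa [mul_comm] using integral_le_integral_of_nonneg_of_le hf continuous_const hx₀a hs.1
      hf₀ (fun x hx => hCf x hx.1)
  have hinner₀ : ∀ s ∈ Icc x₀ a, 0 ≤ ∫ r in x₀..s, f r := fun s hs =>
    integral_nonneg hs.1 fun x hx => hf₀ x ⟨hx.1, hx.2.trans hs.2⟩
  have houter := integral_le_integral_of_nonneg_of_le
    (continuous_primitive (fun _ _ => hf.intervalIntegrable _ _) x₀)
    (continuous_const.mul (continuous_id.sub continuous_const)) hx₀a hab hinner₀ hinner
  have hcomp : ∫ s in a..b, C * (s - a) = C * (b - a) ^ 2 / 2 := by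
    rw [integral_const_mul, integral_comp_sub_right (fun x => x) a, sub_self, integral_id]
    ring
  exact hcomp ▸ houter

lemma Md_eq_M_clamp {δ : ℝ} (hδ : δ ≤ 1 / 2) (φ : ℝ) :
    Md δ φ = M (max δ (min φ (1 - δ))) := by
  unfold Md
  split_ifs with h₁ h₂
  · rw [min_eq_left (by linarith), max_eq_left h₁]
  · rw [min_eq_left h₂, max_eq_right (by linarith)]
  · rw [min_eq_right (by linarith), max_eq_right (by linarith)]

lemma continuous_Md {δ : ℝ} (hδ : δ ≤ 1 / 2) : Continuous (Md δ) := by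
  simp only [funext (Md_eq_M_clamp hδ), M]
  fun_prop

lemma Md_pos {δ : ℝ} (hδ₀ : 0 < δ) (hδ : δ ≤ 1 / 2) (φ : ℝ) : 0 < Md δ φ := by
  rw [Md_eq_M_clamp hδ, M]
  have hlo : δ ≤ max δ (min φ (1 - δ)) := le_max_left _ _
  have hhi : max δ (min φ (1 - δ)) ≤ 1 - δ := max_le (by linarith) (min_le_right _ _)
  have : 0 < 1 - max δ (min φ (1 - δ)) := by linarith
  positivity

lemma Md_of_one_sub_le {δ φ : ℝ} (hδ : δ ≤ 1 / 2) (hφ : 1 - δ ≤ φ) : Md δ φ = M (1 - δ) := by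
  rw [Md_eq_M_clamp hδ, min_eq_right hφ, max_eq_right (by linarith)]

/-- Quadratic lower bound for `Φ_δ` above `1 - δ`. -/
theorem entropy_cutoff_quadratic_bound_right (δ : ℝ) (hδ0 : 0 < δ) (hδ : δ < 1 / 2)
    (φ : ℝ) (hφ : 1 - δ ≤ φ) :
    Phid δ φ ≥ (φ - (1 - δ)) ^ 2 / (2 * δ ^ 2 * (1 - δ) ^ 2) := by
  have hcont : Continuous fun r => 1 / Md δ r :=
    continuous_const.div (continuous_Md hδ.le) fun r => (Md_pos hδ0 hδ.le r).ne'
  have hbound := mul_sq_div_two_le_integral_integral (C := 1 / M (1 - δ)) hcont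
    (by linarith : (1 / 2 : ℝ) ≤ 1 - δ) hφ (fun r _ => (one_div_pos.2 (Md_pos hδ0 hδ.le r)).le)
    (fun r hr => by rw [Md_of_one_sub_le hδ.le hr])
  have hM : M (1 - δ) = δ ^ 2 * (1 - δ) ^ 2 := by rw [M]; ring
  rw [hM] at hbound
  calc (φ - (1 - δ)) ^ 2 / (2 * δ ^ 2 * (1 - δ) ^ 2)
      = 1 / (δ ^ 2 * (1 - δ) ^ 2) * (φ - (1 - δ)) ^ 2 / 2 := by field_simp
    _ ≤ Phid δ φ := hbound
end

section
/- Let (X, μ) be a finite measure space, let (δ_n) ⊂ (0, 1/2) with δ_n → 0, let φ_n : X → ℝ be measurable functions converging to φ almost everywhere, and suppose there is C > 0 with ∫_X Φ_{δ_n}(φ_n(x)) dμ(x) ≤ C for all n. Then μ({x : φ(x) = 0}) = 0 and μ({x : φ(x) = 1}) = 0; combined with the a.e. bounds 0 ≤ φ ≤ 1, the limit satisfies 0 < φ(x) < 1 for μ-almost every x ∈ X (segregation property). -/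
open MeasureTheory Filter

/-!
`Φ_δ` is the convex double primitive, centred at `1/2`, of `1/M_δ`, and `1/M_δ(r) ≥ 1/r²` on
`[δ, 1/2]`. Integrating twice gives `Φ_δ ≥ -log ε - 2` on `(-∞, ε]` whenever `δ ≤ ε ≤ 1/2`, and
the symmetry `M_δ(1 - r) = M_δ(r)` transfers this to `[1 - ε, ∞)`. Hence `Φ_{δ_n}(φ_n(x)) → ∞`
wherever `φ(x) ∉ (0, 1)`, while by Fatou's lemma `liminf Φ_{δ_n}(φ_n)` has finite integral and
so is finite almost everywhere.
-/

open Real Set intervalIntegral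

lemma M_one_sub (φ : ℝ) : M (1 - φ) = M φ := by
  unfold M; ring

lemma M_pos {φ : ℝ} (h0 : 0 < φ) (h1 : φ < 1) : 0 < M φ := by
  have : 0 < 1 - φ := by linarith
  unfold M
  positivity

lemma M_le_sq {φ : ℝ} (h0 : 0 ≤ φ) (h1 : φ ≤ 1) : M φ ≤ φ ^ 2 := by
  unfold M
  exact mul_le_of_le_one_right (sq_nonneg φ) (pow_le_one₀ (by linarith) (by linarith))

lemma Md_one_sub (δ r : ℝ) : Md δ (1 - r) = Md δ r := by
  simp only [Md, M_one_sub]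
  split_ifs <;> first | rfl | linarith | skip
  · rw [show r = 1 - δ by linarith, M_one_sub]
  · rw [show r = δ by linarith]

lemma Md_eq_M {δ r : ℝ} (h₁ : δ ≤ r) (h₂ : r ≤ 1 - δ) : Md δ r = M r := by
  unfold Md
  split_ifs with h
  · rw [le_antisymm h h₁]
  · rfl

lemma M_le_Md {δ : ℝ} (h0 : 0 ≤ δ) (h1 : δ ≤ 1 / 2) (r : ℝ) : M δ ≤ Md δ r := by
  unfold Md
  split_ifs with h
  · exact le_rfl
  · push Not at h
    have hδ : 0 ≤ δ * (1 - δ) := by nlinarith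
    have hr : δ * (1 - δ) ≤ r * (1 - r) := by nlinarith
    unfold M
    calc δ ^ 2 * (1 - δ) ^ 2 = (δ * (1 - δ)) ^ 2 := by ring
      _ ≤ (r * (1 - r)) ^ 2 := pow_le_pow_left₀ hδ hr 2
      _ = r ^ 2 * (1 - r) ^ 2 := by ring
  · rw [M_one_sub]

lemma Md_pos_s15 {δ : ℝ} (h0 : 0 < δ) (h1 : δ ≤ 1 / 2) (r : ℝ) : 0 < Md δ r :=
  (M_pos h0 (by linarith)).trans_le (M_le_Md h0.le h1 r)

lemma measurable_Md (δ : ℝ) : Measurable (Md δ) := by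
  unfold Md M
  refine Measurable.ite measurableSet_Iic measurable_const
    (Measurable.ite measurableSet_Iic (by fun_prop) measurable_const)

lemma intervalIntegrable_one_div_Md {δ : ℝ} (h0 : 0 < δ) (h1 : δ ≤ 1 / 2) (a b : ℝ) :
    IntervalIntegrable (fun r => 1 / Md δ r) volume a b := by
  refine IntervalIntegrable.mono_fun' (g := fun _ => 1 / M δ) intervalIntegrable_const
    (measurable_const.div (measurable_Md δ)).aestronglyMeasurable (ae_of_all _ fun r => ?_)
  dsimp only
  rw [Real.norm_of_nonneg (one_div_pos.2 (Md_pos_s15 h0 h1 r)).le]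
  exact one_div_le_one_div_of_le (M_pos h0 (by linarith)) (M_le_Md h0.le h1 r)

lemma continuous_Phid {δ : ℝ} (h0 : 0 < δ) (h1 : δ ≤ 1 / 2) : Continuous (Phid δ) :=
  continuous_primitive
    (continuous_primitive (intervalIntegrable_one_div_Md h0 h1) _).intervalIntegrable _

lemma integral_reflect {E : Type*} [NormedAddCommGroup E] [NormedSpace ℝ E] (f : ℝ → E)
    {c d : ℝ} (h : d - c = c) (s : ℝ) :
    ∫ r in c..(d - s), f r = -∫ r in c..s, f (d - r) := by
  rw [integral_comp_sub_left, h, ← integral_symm]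

lemma Phid_one_sub (δ φ : ℝ) : Phid δ (1 - φ) = Phid δ φ := by
  have h : (1 : ℝ) - 1 / 2 = 1 / 2 := by norm_num
  have inner (s : ℝ) :
      ∫ r in (1 / 2 : ℝ)..(1 - s), 1 / Md δ r = -∫ r in (1 / 2 : ℝ)..s, 1 / Md δ r := by
    simp only [integral_reflect _ h, Md_one_sub]
  rw [Phid, Phid, integral_reflect _ h]
  simp only [inner, intervalIntegral.integral_neg, neg_neg]

lemma integral_zpow_neg_two {a b : ℝ} (ha : 0 < a) (hb : 0 < b) :
    ∫ x in a..b, x ^ (-2 : ℤ) = a⁻¹ - b⁻¹ := by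
  rw [integral_zpow (Or.inr ⟨by norm_num, notMem_uIcc_of_lt ha hb⟩)]
  norm_num
  ring

lemma inv_sub_two_le_integral_one_div_Md {δ s : ℝ} (hδ : 0 < δ) (hδs : δ ≤ s) (hs : s ≤ 1 / 2) :
    s⁻¹ - 2 ≤ ∫ r in s..(1 / 2 : ℝ), 1 / Md δ r := by
  have hs0 : 0 < s := hδ.trans_le hδs
  calc s⁻¹ - 2 = ∫ r in s..(1 / 2 : ℝ), r ^ (-2 : ℤ) := by
        rw [integral_zpow_neg_two hs0 (by norm_num)]; norm_num
    _ ≤ ∫ r in s..(1 / 2 : ℝ), 1 / Md δ r := by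
        refine integral_mono_on hs (intervalIntegrable_zpow (Or.inr (notMem_uIcc_of_lt hs0
          (by norm_num)))) (intervalIntegrable_one_div_Md hδ (by linarith) _ _) fun r hr => ?_
        have hr0 : 0 < r := hs0.trans_le hr.1
        rw [Md_eq_M (hδs.trans hr.1) (by linarith [hr.2]), zpow_neg, zpow_ofNat, one_div]
        exact inv_anti₀ (M_pos hr0 (by linarith [hr.2])) (M_le_sq hr0.le (by linarith [hr.2]))

lemma neg_log_sub_two_le_Phid_of_le {δ ε φ : ℝ} (hδ : 0 < δ) (hδε : δ ≤ ε) (hε : ε ≤ 1 / 2)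
    (hφ : φ ≤ ε) : -log ε - 2 ≤ Phid δ φ := by
  have hε0 : 0 < ε := hδ.trans_le hδε
  set g : ℝ → ℝ := fun s => ∫ r in s..(1 / 2 : ℝ), 1 / Md δ r
  have hg : Continuous g :=
    (continuous_primitive (intervalIntegrable_one_div_Md hδ (hδε.trans hε)) (1 / 2)).neg.congr
      fun s => (integral_symm (1 / 2) s).symm
  have hg_nonneg (s : ℝ) (hs : s ≤ 1 / 2) : 0 ≤ g s :=
    integral_nonneg hs fun r _ => (one_div_pos.2 (Md_pos_s15 hδ (hδε.trans hε) r)).le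
  have hinv : IntervalIntegrable (fun s => s⁻¹) volume ε (1 / 2) :=
    intervalIntegrable_inv_iff.2 (Or.inr (notMem_uIcc_of_lt hε0 (by norm_num)))
  have hlog : log (1 / 2 / ε) = -log 2 - log ε := by
    rw [log_div (by norm_num) hε0.ne', one_div, log_inv]
  calc -log ε - 2 ≤ log (1 / 2 / ε) - 2 * (1 / 2 - ε) := by
        rw [hlog]; linarith [log_two_lt_d9]
    _ = ∫ s in ε..(1 / 2 : ℝ), (s⁻¹ - 2) := by
        rw [intervalIntegral.integral_sub hinv intervalIntegrable_const,
          integral_inv_of_pos hε0 (by norm_num), intervalIntegral.integral_const, smul_eq_mul]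
        ring
    _ ≤ ∫ s in ε..(1 / 2 : ℝ), g s :=
        integral_mono_on hε (hinv.sub intervalIntegrable_const) (hg.intervalIntegrable _ _)
          fun s hs => inv_sub_two_le_integral_one_div_Md hδ (hδε.trans hs.1) hs.2
    _ ≤ ∫ s in φ..(1 / 2 : ℝ), g s := integral_mono_interval hφ hε le_rfl
        ((ae_restrict_iff' measurableSet_Ioc).2 (ae_of_all _ fun s hs => hg_nonneg s hs.2))
        (hg.intervalIntegrable _ _)
    _ = Phid δ φ := by
        simp only [Phid, g, integral_symm (1 / 2 : ℝ), intervalIntegral.integral_neg, neg_neg]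

lemma neg_log_sub_two_le_Phid {δ ε φ : ℝ} (hδ : 0 < δ) (hδε : δ ≤ ε) (hε : ε ≤ 1 / 2)
    (hφ : φ ≤ ε ∨ 1 - ε ≤ φ) : -log ε - 2 ≤ Phid δ φ := by
  rcases hφ with hφ | hφ
  · exact neg_log_sub_two_le_Phid_of_le hδ hδε hε hφ
  · rw [← Phid_one_sub]
    exact neg_log_sub_two_le_Phid_of_le hδ hδε hε (by linarith)

lemma tendsto_Phid_atTop {ι : Type*} {l : Filter ι} {δ u : ι → ℝ} {a : ℝ}
    (hδ : ∀ᶠ i in l, 0 < δ i) (hδ0 : Tendsto δ l (nhds 0)) (hu : Tendsto u l (nhds a))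
    (ha : a ≤ 0 ∨ 1 ≤ a) : Tendsto (fun i => Phid (δ i) (u i)) l atTop := by
  refine tendsto_atTop.2 fun c => ?_
  set ε := min (1 / 2) (exp (-(c + 2)))
  have hε0 : 0 < ε := lt_min (by norm_num) (exp_pos _)
  have hc : c ≤ -log ε - 2 := by
    have := log_le_log hε0 (min_le_right _ _)
    rw [log_exp] at this
    linarith
  have hu' : ∀ᶠ i in l, u i ≤ ε ∨ 1 - ε ≤ u i := by
    rcases ha with ha | ha
    · exact (hu.eventually_lt_const (by linarith)).mono fun i hi => Or.inl hi.le
    · exact (hu.eventually_const_lt (by linarith)).mono fun i hi => Or.inr hi.le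
  filter_upwards [hδ, hδ0.eventually_lt_const hε0, hu'] with i hδi hδε hui
  exact hc.trans (neg_log_sub_two_le_Phid hδi hδε.le (min_le_left _ _) hui)

lemma ae_not_tendsto_top_of_lintegral_le {α : Type*} [MeasurableSpace α] {μ : Measure α}
    {f : ℕ → α → ENNReal} (hf : ∀ n, Measurable (f n)) {C : ENNReal} (hC : C ≠ ⊤)
    (hle : ∀ n, ∫⁻ x, f n x ∂μ ≤ C) : ∀ᵐ x ∂μ, ¬Tendsto (fun n => f n x) atTop (nhds ⊤) := by
  have hfin : ∫⁻ x, liminf (fun n => f n x) atTop ∂μ ≠ ⊤ :=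
    ((lintegral_liminf_le hf).trans
      (liminf_le_of_frequently_le' (Frequently.of_forall hle))).trans_lt hC.lt_top |>.ne
  filter_upwards [ae_lt_top (Measurable.liminf hf) hfin] with x hx htop
  exact hx.ne htop.liminf_eq

theorem segregation_property_general {X : Type*} [MeasurableSpace X] (μ : Measure X)
    (δ : ℕ → ℝ) (hδ : ∀ n, δ n ∈ Set.Ioo (0 : ℝ) (1 / 2))
    (hδ0 : Tendsto δ atTop (nhds 0))
    (φn : ℕ → X → ℝ) (hφn : ∀ n, Measurable (φn n)) (φ : X → ℝ)
    (hae : ∀ᵐ x ∂μ, Tendsto (fun n => φn n x) atTop (nhds (φ x)))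
    (C : ℝ)
    (hent : ∀ n, ∫⁻ x, ENNReal.ofReal (Phid (δ n) (φn n x)) ∂μ ≤ ENNReal.ofReal C) :
    μ {x | φ x = 0} = 0 ∧ μ {x | φ x = 1} = 0 ∧ ∀ᵐ x ∂μ, 0 < φ x ∧ φ x < 1 := by
  have hmeas (n : ℕ) : Measurable fun x => ENNReal.ofReal (Phid (δ n) (φn n x)) :=
    ENNReal.measurable_ofReal.comp
      ((continuous_Phid (hδ n).1 (hδ n).2.le).measurable.comp (hφn n))
  have hmain : ∀ᵐ x ∂μ, 0 < φ x ∧ φ x < 1 := by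
    filter_upwards [hae, ae_not_tendsto_top_of_lintegral_le hmeas ENNReal.ofReal_ne_top hent]
      with x hx hbdd
    by_contra hout
    rw [not_and_or, not_lt, not_lt] at hout
    exact hbdd (ENNReal.tendsto_ofReal_atTop.comp
      (tendsto_Phid_atTop (.of_forall fun n => (hδ n).1) hδ0 hx hout))
  refine ⟨?_, ?_, hmain⟩
  · simpa [ae_iff] using hmain.mono fun x hx => hx.1.ne'
  · simpa [ae_iff] using hmain.mono fun x hx => hx.2.ne

/-- Segregation property: the a.e. limit of entropy-bounded approximations satisfies
`0 < φ < 1` a.e.; in particular the sets `{φ = 0}` and `{φ = 1}` are null. -/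
theorem segregation_property {X : Type*} [MeasurableSpace X] (μ : Measure X)
    [IsFiniteMeasure μ] (δ : ℕ → ℝ) (hδ : ∀ n, δ n ∈ Set.Ioo (0 : ℝ) (1 / 2))
    (hδ0 : Tendsto δ atTop (nhds 0))
    (φn : ℕ → X → ℝ) (hφn : ∀ n, Measurable (φn n)) (φ : X → ℝ)
    (hae : ∀ᵐ x ∂μ, Tendsto (fun n => φn n x) atTop (nhds (φ x)))
    (C : ℝ) (hC : 0 < C)
    (hent : ∀ n, ∫⁻ x, ENNReal.ofReal (Phid (δ n) (φn n x)) ∂μ ≤ ENNReal.ofReal C) :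
    μ {x | φ x = 0} = 0 ∧ μ {x | φ x = 1} = 0 ∧ ∀ᵐ x ∂μ, 0 < φ x ∧ φ x < 1 :=
  segregation_property_general μ δ hδ hδ0 φn hφn φ hae C hent
end
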